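/- Let 0 < r < 1 and define b_r : A_r → ℂ² by b_r(λ) = (λ/√(r²+1), r/(√(r²+1)·λ)). Then: (i) for every λ ∈ A_r, |λ|²/(r²+1) + r²/((r²+1)·|λ|²) < 1, i.e. b_r maps A_r into the open unit ball 𝔹_2 = {(z_1,z_2) ∈ ℂ² : |z_1|² + |z_2|² < 1}; and (ii) for all λ, μ ∈ A_r, k_{A_r}(λ,μ) = ((1−r²)/(1+r²)) · 1/(1 − ⟨b_r(λ), b_r(μ)⟩), where ⟨u,v⟩ = u_1·conj(v_1) + u_2·conj(v_2). In particular, ((1+r²)/(1−r²))·k_{A_r} is a normalized complete Pick kernel. -/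

import Mathlib

open Complex ComplexConjugate ContinuousLinearMap
open scoped ComplexOrder

noncomputable section

/-- The open annulus `A_r = {z : r < |z| < 1}`. -/
def annulus (r : ℝ) : Set ℂ := {z : ℂ | r < ‖z‖ ∧ ‖z‖ < 1}

/-- The kernel `k_{A_r}(λ,μ) = (1-r²)/((1-λμ̄)(1-r²/(λμ̄)))`. -/
def kAnn (r : ℝ) (l m : ℂ) : ℂ :=
  (1 - (r : ℂ) ^ 2) / ((1 - l * conj m) * (1 - (r : ℂ) ^ 2 / (l * conj m)))

/-- A kernel `k` is positive semi-definite on a set `A`. -/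
def IsPosSemidefOn {X : Type*} (A : Set X) (k : X → X → ℂ) : Prop :=
  ∀ (n : ℕ) (x : Fin n → X), (∀ i, x i ∈ A) → ∀ w : Fin n → ℂ,
    0 ≤ ∑ i, ∑ j, k (x j) (x i) * w i * conj (w j)

/-- Integer powers of an operator `T` with given inverse `Tinv`:
`T^n` for `n ≥ 0` and `(T⁻¹)^{-n}` for `n < 0`. -/
def opZpow {H : Type*} [NormedAddCommGroup H] [NormedSpace ℂ H]
    (T Tinv : H →L[ℂ] H) (n : ℤ) : H →L[ℂ] H :=
  if 0 ≤ n then T ^ n.toNat else Tinv ^ (-n).toNat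

/-- The operator inequality `r²·T⁻¹(T⁻¹)* + T·T* ≤ (r²+1)·I`. -/
def opCond (r : ℝ) {H : Type*} [NormedAddCommGroup H] [InnerProductSpace ℂ H]
    [CompleteSpace H] (T Tinv : H →L[ℂ] H) : Prop :=
  (((r : ℂ) ^ 2 + 1) • (1 : H →L[ℂ] H)
    - ((r : ℂ) ^ 2 • (Tinv * ContinuousLinearMap.adjoint Tinv)
        + T * ContinuousLinearMap.adjoint T)).IsPositive

/-- The open unit ball `𝔹₂ ⊆ ℂ²`. -/
def ballC2 : Set (ℂ × ℂ) := {u : ℂ × ℂ | ‖u.1‖ ^ 2 + ‖u.2‖ ^ 2 < 1}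

/-- The embedding `b_r(λ) = (λ/√(r²+1), r/(√(r²+1)·λ))`. -/
def bmap (r : ℝ) (l : ℂ) : ℂ × ℂ :=
  (l / (Real.sqrt (r ^ 2 + 1) : ℂ), (r : ℂ) / ((Real.sqrt (r ^ 2 + 1) : ℂ) * l))

/-- The hermitian pairing `⟨u,v⟩ = u₁v̄₁ + u₂v̄₂` on `ℂ²`. -/
def hermInner (u v : ℂ × ℂ) : ℂ := u.1 * conj v.1 + u.2 * conj v.2

/-! With `z = λ μ̄` one has `(1 + r²) ⟨b_r(λ), b_r(μ)⟩ = z + r²/z`, hence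
`1 - ⟨b_r(λ), b_r(μ)⟩ = (1 - z)(z - r²) / ((1 + r²) z)`, which is the denominator of
`k_{A_r}` up to the factor `(1 + r²)`. For `λ = μ` the numerator `(1 - |λ|²)(|λ|² - r²)`
is positive exactly on the annulus. -/

theorem sq_div_add_sq_div_lt_one {r x : ℝ} (hr : 0 ≤ r) (hrx : r < x) (hx : x < 1) :
    x ^ 2 / (r ^ 2 + 1) + r ^ 2 / ((r ^ 2 + 1) * x ^ 2) < 1 := by
  have hx0 : 0 < x := hr.trans_lt hrx
  rw [div_add_div _ _ (by positivity) (by positivity), div_lt_one (by positivity)]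
  -- `(r² + 1) x² - x⁴ - r² = (1 - x²)(x² - r²)`
  have hfactor : 0 < (1 - x ^ 2) * (x ^ 2 - r ^ 2) :=
    mul_pos (by nlinarith) (by nlinarith)
  nlinarith [mul_pos (by positivity : (0 : ℝ) < r ^ 2 + 1) hfactor]

theorem bmap_mem_ballC2_iff (r : ℝ) (l : ℂ) :
    bmap r l ∈ ballC2 ↔ ‖l‖ ^ 2 / (r ^ 2 + 1) + r ^ 2 / ((r ^ 2 + 1) * ‖l‖ ^ 2) < 1 := by
  have hsq : Real.sqrt (r ^ 2 + 1) ^ 2 = r ^ 2 + 1 := Real.sq_sqrt (by positivity)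
  simp only [ballC2, bmap, Set.mem_ofPred_eq, norm_div, norm_mul, Complex.norm_real,
    Real.norm_eq_abs, div_pow, mul_pow, sq_abs, abs_of_nonneg (Real.sqrt_nonneg _), hsq]

theorem hermInner_bmap (r : ℝ) (l m : ℂ) :
    hermInner (bmap r l) (bmap r m) =
      l * conj m / ((r : ℂ) ^ 2 + 1) + (r : ℂ) ^ 2 / (((r : ℂ) ^ 2 + 1) * (l * conj m)) := by
  have hsq : ((Real.sqrt (r ^ 2 + 1) : ℝ) : ℂ) ^ 2 = (r : ℂ) ^ 2 + 1 := by
    rw [← Complex.ofReal_pow, Real.sq_sqrt (by positivity)]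
    push_cast
    ring
  simp only [hermInner, bmap, map_div₀, map_mul, Complex.conj_ofReal, ← hsq]
  simp only [div_eq_mul_inv, mul_inv]
  ring

theorem ne_zero_of_mem_annulus {r : ℝ} (hr : 0 ≤ r) {l : ℂ} (hl : l ∈ annulus r) : l ≠ 0 :=
  norm_pos_iff.mp (hr.trans_lt hl.1)

theorem kAnn_eq_of_ne_zero (r : ℝ) {l m : ℂ} (hl : l ≠ 0) (hm : m ≠ 0) :
    kAnn r l m = (((1 - r ^ 2) / (1 + r ^ 2) : ℝ) : ℂ) *
      (1 / (1 - (l * conj m / ((r : ℂ) ^ 2 + 1)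
        + (r : ℂ) ^ 2 / (((r : ℂ) ^ 2 + 1) * (l * conj m))))) := by
  have hz : l * conj m ≠ 0 := mul_ne_zero hl ((map_ne_zero _).mpr hm)
  have hr : (r : ℂ) ^ 2 + 1 ≠ 0 := by exact_mod_cast (by positivity : r ^ 2 + 1 ≠ 0)
  rw [kAnn]
  set z := l * conj m
  have hcast : (((1 - r ^ 2) / (1 + r ^ 2) : ℝ) : ℂ) = (1 - (r : ℂ) ^ 2) / ((r : ℂ) ^ 2 + 1) := by
    push_cast
    ring
  have hden : 1 - (z / ((r : ℂ) ^ 2 + 1) + (r : ℂ) ^ 2 / (((r : ℂ) ^ 2 + 1) * z)) =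
      (1 - z) * (z - (r : ℂ) ^ 2) / (((r : ℂ) ^ 2 + 1) * z) := by
    field_simp
    ring
  rw [hcast, hden, one_div_div, one_sub_div hz]
  field_simp

theorem kAnn_complete_pick_general (r : ℝ) (hr0 : 0 < r) :
    (∀ l ∈ annulus r,
      ‖l‖ ^ 2 / (r ^ 2 + 1) + r ^ 2 / ((r ^ 2 + 1) * ‖l‖ ^ 2) < 1 ∧
      bmap r l ∈ ballC2) ∧
    ∀ l ∈ annulus r, ∀ m ∈ annulus r,
      kAnn r l m = (((1 - r ^ 2) / (1 + r ^ 2) : ℝ) : ℂ)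
        * (1 / (1 - hermInner (bmap r l) (bmap r m))) := by
  refine ⟨fun l hl => ?_, fun l hl m hm => ?_⟩
  · have h := sq_div_add_sq_div_lt_one hr0.le hl.1 hl.2
    exact ⟨h, (bmap_mem_ballC2_iff r l).mpr h⟩
  · rw [hermInner_bmap]
    exact kAnn_eq_of_ne_zero r (ne_zero_of_mem_annulus hr0.le hl)
      (ne_zero_of_mem_annulus hr0.le hm)

/-- `b_r` maps `A_r` into the open unit ball `𝔹₂` and
`k_{A_r}(λ,μ) = ((1-r²)/(1+r²)) · 1/(1 - ⟨b_r(λ), b_r(μ)⟩)`, so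
`((1+r²)/(1-r²))·k_{A_r}` is a normalized complete Pick kernel. -/
theorem kAnn_complete_pick (r : ℝ) (hr0 : 0 < r) (hr1 : r < 1) :
    (∀ l ∈ annulus r,
      ‖l‖ ^ 2 / (r ^ 2 + 1) + r ^ 2 / ((r ^ 2 + 1) * ‖l‖ ^ 2) < 1 ∧
      bmap r l ∈ ballC2) ∧
    ∀ l ∈ annulus r, ∀ m ∈ annulus r,
      kAnn r l m = (((1 - r ^ 2) / (1 + r ^ 2) : ℝ) : ℂ)
        * (1 / (1 - hermInner (bmap r l) (bmap r m))) :=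
  kAnn_complete_pick_general r hr0

end
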